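/- arXiv:1603.08541 — 2 statements merged into one kernel-verified Lean document; each statement's English description precedes it below -/
import Mathlib

section
/- Let $u : [0,\infty) \to H$ be a $C^1$ solution of $u' + Lu + Pu = 0$ in a Hilbert space $H$, where $L$ is a (possibly unbounded) skew-adjoint operator and $P$ is bounded with operator norm $\le K$ and $\langle Pv, v\rangle \ge 0$. Assume $\partial_t u$ also solves the same equation. Then for all $t \ge 0$: $\|Lu(t)\| \le \|Lu(0)\| + 2K\|u(0)\|$. -/
/-!
The flow of `u' = -(L + P) u` with `L` skew and `P` accretive is an `L²`-contraction. Since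
`∂ₜu` solves the same equation, `‖∂ₜu(t)‖ ≤ ‖∂ₜu(0)‖`; the equation converts `Lu` into `∂ₜu`
up to `Pu`, which costs `K‖u‖ ≤ K‖u(0)‖` at both ends.
-/

open scoped RealInnerProductSpace

section Contraction

variable {E : Type*} [NormedAddCommGroup E] [InnerProductSpace ℝ E]

lemma inner_apply_self_eq_zero_of_skew {L : E →ₗ[ℝ] E} (hL : ∀ v w : E, ⟪L v, w⟫ = -⟪v, L w⟫)
    (v : E) : ⟪L v, v⟫ = 0 := by
  have h := hL v v
  rw [real_inner_comm (L v) v] at h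
  linarith

lemma antitone_norm_of_hasDerivAt_neg {A : E → E} (hA : ∀ v, 0 ≤ ⟪A v, v⟫) {v : ℝ → E}
    (hv : ∀ t, HasDerivAt v (-A (v t)) t) : Antitone fun t => ‖v t‖ := by
  have hsq : Antitone fun t => ‖v t‖ ^ 2 := by
    refine antitone_of_hasDerivAt_nonpos (fun t => (hv t).norm_sq) fun t => ?_
    show 2 * ⟪v t, -A (v t)⟫ ≤ 0
    rw [inner_neg_right, real_inner_comm]
    linarith [hA (v t)]
  intro s t hst
  exact (pow_le_pow_iff_left₀ (norm_nonneg _) (norm_nonneg _) two_ne_zero).mp (hsq hst)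

end Contraction

/-- Uniform-in-time higher-order estimate obtained by commuting `∂ₜ` with the
damped equation `u' + Lu + Pu = 0`. -/
theorem stmt10 {E : Type*} [NormedAddCommGroup E] [InnerProductSpace ℝ E]
    (L : E →ₗ[ℝ] E)
    (hL : ∀ v w : E, (inner ℝ (L v) w : ℝ) = -(inner ℝ v (L w) : ℝ))
    (P : E →L[ℝ] E) (K : ℝ) (hPK : ‖P‖ ≤ K)
    (hP : ∀ v : E, (0:ℝ) ≤ (inner ℝ (P v) v : ℝ))
    (u u' : ℝ → E)
    (hu : ∀ t : ℝ, HasDerivAt u (u' t) t)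
    (heq : ∀ t : ℝ, u' t = -(L (u t)) - P (u t))
    (heq' : ∀ t : ℝ, HasDerivAt u' (-(L (u' t)) - P (u' t)) t) :
    ∀ t : ℝ, 0 ≤ t → ‖L (u t)‖ ≤ ‖L (u 0)‖ + 2 * K * ‖u 0‖ := by
  intro t ht
  have hLP : ∀ v, 0 ≤ ⟪L v + P v, v⟫ := fun v => by
    rw [inner_add_left, inner_apply_self_eq_zero_of_skew hL, zero_add]
    exact hP v
  have hflow : ∀ w : ℝ → E, (∀ s, HasDerivAt w (-(L (w s)) - P (w s)) s) →
      Antitone fun s => ‖w s‖ := fun w hw =>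
    antitone_norm_of_hasDerivAt_neg hLP fun s => by simpa only [neg_add'] using hw s
  have hu_le : ‖u t‖ ≤ ‖u 0‖ := hflow u (fun s => heq s ▸ hu s) ht
  have hu'_le : ‖u' t‖ ≤ ‖u' 0‖ := hflow u' heq' ht
  have hPu : ∀ s, ‖P (u s)‖ ≤ K * ‖u s‖ := fun s => P.le_of_opNorm_le hPK (u s)
  have hK : 0 ≤ K := (norm_nonneg P).trans hPK
  have hLu : ∀ s, L (u s) = -u' s - P (u s) := fun s => by rw [heq s]; abel
  calc ‖L (u t)‖ ≤ ‖u' t‖ + ‖P (u t)‖ := by rw [hLu, ← norm_neg (u' t)]; exact norm_sub_le _ _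
    _ ≤ ‖u' 0‖ + K * ‖u 0‖ := by gcongr; exact (hPu t).trans (by gcongr)
    _ ≤ ‖L (u 0)‖ + ‖P (u 0)‖ + K * ‖u 0‖ := by
        rw [heq 0, ← norm_neg (L (u 0))]; gcongr; exact norm_sub_le _ _
    _ ≤ ‖L (u 0)‖ + 2 * K * ‖u 0‖ := by linarith [hPu 0]
end

section
/- Let $m \in C^\infty([0,L])$ with $m(0) = m(L) = 0$, and let $(\eta,\psi)$ be a regular solution of $\partial_t\eta = G(\eta)\psi$, $\partial_t\psi + g\eta + N(\eta)\psi = -P_{ext}$ on $[0,T]$. Then $\int_0^T\!\!\int_0^L m_x \Theta\,dx\,dt + R_a = -\left[\int_0^L \partial_x(m\eta)\,\psi\,dx\right]_0^T - \int_0^T\!\!\int_0^L P_{ext}\, m\,\eta_x\,dx\,dt$, where $\Theta = -\eta\,\partial_t\psi - \frac{g}{2}\eta^2$ and $R_a = \int_0^T\!\!\int_0^L \left[(G(\eta)\psi)\,m\,\psi_x + (N(\eta)\psi)\,m\,\eta_x\right]dx\,dt$. -/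
open MeasureTheory intervalIntegral Set Filter Function Topology

section helpers
lemma fubini_cont {T L : ℝ} (hT : 0 ≤ T) (hL : 0 ≤ L) {f : ℝ → ℝ → ℝ}
    (hf : Continuous (uncurry f)) :
    ∫ t in (0:ℝ)..T, ∫ x in (0:ℝ)..L, f t x = ∫ x in (0:ℝ)..L, ∫ t in (0:ℝ)..T, f t x := by
  rw [intervalIntegral.integral_of_le hT, intervalIntegral.integral_of_le hL]
  simp_rw [intervalIntegral.integral_of_le hT, intervalIntegral.integral_of_le hL]
  rw [MeasureTheory.integral_integral_swap]
  rw [Measure.prod_restrict]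
  rw [← Measure.volume_eq_prod]
  exact (hf.continuousOn.integrableOn_compact (isCompact_Icc.prod isCompact_Icc)).mono_set
    (Set.prod_mono Set.Ioc_subset_Icc_self Set.Ioc_subset_Icc_self)

lemma tendsto_ii {a b C : ℝ} {F : ℕ → ℝ → ℝ} {f : ℝ → ℝ}
    (hFc : ∀ n, Continuous (F n))
    (hbd : ∀ n x, x ∈ Set.uIcc a b → |F n x| ≤ C)
    (hlim : ∀ x ∈ Set.uIcc a b, Tendsto (fun n => F n x) atTop (𝓝 (f x))) :
    Tendsto (fun n => ∫ x in a..b, F n x) atTop (𝓝 (∫ x in a..b, f x)) :=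
  intervalIntegral.tendsto_integral_filter_of_dominated_convergence (fun _ => C)
    (Eventually.of_forall fun n => (hFc n).aestronglyMeasurable)
    (Eventually.of_forall fun n => ae_of_all _ fun x hx => by
      rw [Real.norm_eq_abs]; exact hbd n x (Set.uIoc_subset_uIcc hx))
    intervalIntegrable_const
    (ae_of_all _ fun x hx => hlim x (Set.uIoc_subset_uIcc hx))

lemma tendsto_iint {T L C : ℝ} (hT : 0 ≤ T) (hL : 0 ≤ L) {F : ℕ → ℝ → ℝ → ℝ} {f : ℝ → ℝ → ℝ}
    (hFc : ∀ n, Continuous (uncurry (F n)))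
    (hbd : ∀ n t x, t ∈ Set.Icc 0 T → x ∈ Set.Icc 0 L → |F n t x| ≤ C)
    (hlim : ∀ t x, Tendsto (fun n => F n t x) atTop (𝓝 (f t x))) :
    Tendsto (fun n => ∫ t in (0:ℝ)..T, ∫ x in (0:ℝ)..L, F n t x) atTop
      (𝓝 (∫ t in (0:ℝ)..T, ∫ x in (0:ℝ)..L, f t x)) := by
  have hC : 0 ≤ C := le_trans (abs_nonneg _) (hbd 0 0 0 ⟨le_refl 0, hT⟩ ⟨le_refl 0, hL⟩)
  apply tendsto_ii (C := C * L)
  · intro n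
    exact intervalIntegral.continuous_parametric_intervalIntegral_of_continuous' (hFc n) 0 L
  · intro n t ht
    rw [Set.uIcc_of_le hT] at ht
    calc |∫ x in (0:ℝ)..L, F n t x| ≤ C * |L - 0| := by
          rw [← Real.norm_eq_abs]
          apply intervalIntegral.norm_integral_le_of_norm_le_const
          intro x hx
          rw [Set.uIoc_of_le hL] at hx
          rw [Real.norm_eq_abs]
          exact hbd n t x ht ⟨hx.1.le, hx.2⟩
      _ = C * L := by rw [sub_zero, abs_of_nonneg hL]
  · intro t ht
    rw [Set.uIcc_of_le hT] at ht
    apply tendsto_ii (C := C)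
    · intro n
      exact (hFc n).comp (continuous_const.prodMk continuous_id)
    · intro n x hx
      rw [Set.uIcc_of_le hL] at hx
      exact hbd n t x ht hx
    · exact fun x _ => hlim t x

noncomputable def DQ (f : ℝ → ℝ → ℝ) (n : ℕ) (t x : ℝ) : ℝ :=
  (f t (x + 1/((n:ℝ)+1)) - f t x) * ((n:ℝ)+1)

noncomputable def AQ (f : ℝ → ℝ → ℝ) (n : ℕ) (t x : ℝ) : ℝ :=
  (∫ y in x..(x + 1/((n:ℝ)+1)), f t y) * ((n:ℝ)+1)

lemma hn_pos (n : ℕ) : (0:ℝ) < 1/((n:ℝ)+1) := by positivity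

lemma hn_le_one (n : ℕ) : 1/((n:ℝ)+1) ≤ 1 := by
  rw [div_le_one (by positivity)]
  linarith [(Nat.cast_nonneg n : (0:ℝ) ≤ n)]

lemma slice_cont {f : ℝ → ℝ → ℝ} (hf : Continuous (uncurry f)) (t : ℝ) :
    Continuous (fun x => f t x) := hf.comp (continuous_const.prodMk continuous_id)

lemma slice_cont' {f : ℝ → ℝ → ℝ} (hf : Continuous (uncurry f)) (x : ℝ) :
    Continuous (fun t => f t x) := hf.comp (continuous_id.prodMk continuous_const)

lemma DQ_cont {f : ℝ → ℝ → ℝ} (hf : Continuous (uncurry f)) (n : ℕ) :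
    Continuous (uncurry (DQ f n)) := by
  have : uncurry (DQ f n) = fun p : ℝ × ℝ =>
      (uncurry f (p.1, p.2 + 1/((n:ℝ)+1)) - uncurry f p) * ((n:ℝ)+1) := rfl
  rw [this]
  exact ((hf.comp (continuous_fst.prodMk (continuous_snd.add continuous_const))).sub hf).mul
    continuous_const

lemma AQ_eq {f : ℝ → ℝ → ℝ} (hf : Continuous (uncurry f)) (n : ℕ) (t x : ℝ) :
    AQ f n t x = ((∫ y in (0:ℝ)..(x + 1/((n:ℝ)+1)), f t y) - ∫ y in (0:ℝ)..x, f t y) * ((n:ℝ)+1) := by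
  rw [AQ, intervalIntegral.integral_interval_sub_left
    ((slice_cont hf t).intervalIntegrable _ _) ((slice_cont hf t).intervalIntegrable _ _)]

lemma AQ_cont {f : ℝ → ℝ → ℝ} (hf : Continuous (uncurry f)) (n : ℕ) :
    Continuous (uncurry (AQ f n)) := by
  have k : Continuous fun p : ℝ × ℝ => ∫ y in (0:ℝ)..p.2, f p.1 y :=
    intervalIntegral.continuous_parametric_primitive_of_continuous hf
  have : uncurry (AQ f n) = fun p : ℝ × ℝ =>
      (((fun q : ℝ × ℝ => ∫ y in (0:ℝ)..q.2, f q.1 y) (p.1, p.2 + 1/((n:ℝ)+1)))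
        - ∫ y in (0:ℝ)..p.2, f p.1 y) * ((n:ℝ)+1) := by
    funext p
    exact AQ_eq hf n p.1 p.2
  rw [this]
  exact (((k.comp (continuous_fst.prodMk (continuous_snd.add continuous_const))).sub k).mul
    continuous_const)

lemma AQ_hasDerivAt {f : ℝ → ℝ → ℝ} (hf : Continuous (uncurry f)) (n : ℕ) (t x : ℝ) :
    HasDerivAt (fun x' => AQ f n t x') (DQ f n t x) x := by
  have hc := slice_cont hf t
  have hFd : ∀ z : ℝ, HasDerivAt (fun u => ∫ y in (0:ℝ)..u, f t y) (f t z) z := fun z =>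
    intervalIntegral.integral_hasDerivAt_right (hc.intervalIntegrable _ _)
      (hc.stronglyMeasurableAtFilter _ _) hc.continuousAt
  have h1 : HasDerivAt (fun x' => ∫ y in (0:ℝ)..(x' + 1/((n:ℝ)+1)), f t y)
      (f t (x + 1/((n:ℝ)+1))) x := HasDerivAt.comp_add_const x _ (hFd _)
  refine ((h1.sub (hFd x)).mul_const ((n:ℝ)+1)).congr_of_eventuallyEq ?_
  filter_upwards with x'
  exact AQ_eq hf n t x'

lemma tendsto_seq_slopeaux :
    Tendsto (fun n : ℕ => 1/((n:ℝ)+1)) atTop (𝓝[≠] (0:ℝ)) := by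
  apply tendsto_nhdsWithin_of_tendsto_nhds_of_eventually_within
  · exact tendsto_one_div_add_atTop_nhds_zero_nat
  · filter_upwards with n
    exact (hn_pos n).ne'

lemma DQ_tendsto {f : ℝ → ℝ → ℝ} {fx : ℝ} {t x : ℝ}
    (hfd : HasDerivAt (fun x' => f t x') fx x) :
    Tendsto (fun n => DQ f n t x) atTop (𝓝 fx) := by
  have h := (hasDerivAt_iff_tendsto_slope_zero.mp hfd).comp tendsto_seq_slopeaux
  refine h.congr fun n => ?_
  simp only [Function.comp_apply, smul_eq_mul]
  rw [DQ, one_div, inv_inv, mul_comm]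

lemma AQ_tendsto {f : ℝ → ℝ → ℝ} (hf : Continuous (uncurry f)) (t x : ℝ) :
    Tendsto (fun n => AQ f n t x) atTop (𝓝 (f t x)) := by
  have hc := slice_cont hf t
  have hFd : HasDerivAt (fun u => ∫ y in x..u, f t y) (f t x) x :=
    intervalIntegral.integral_hasDerivAt_right (hc.intervalIntegrable _ _)
      (hc.stronglyMeasurableAtFilter _ _) hc.continuousAt
  have h := (hasDerivAt_iff_tendsto_slope_zero.mp hFd).comp tendsto_seq_slopeaux
  refine h.congr fun n => ?_
  simp only [Function.comp_apply, smul_eq_mul]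
  rw [AQ, one_div, inv_inv, mul_comm, intervalIntegral.integral_same, sub_zero]

lemma AQ_bound {f : ℝ → ℝ → ℝ} {C t x : ℝ} (hf : Continuous (uncurry f)) (n : ℕ)
    (hb : ∀ y ∈ Set.Icc x (x+1), |f t y| ≤ C) : |AQ f n t x| ≤ C := by
  have hpos := hn_pos n
  have h1 := hn_le_one n
  have key : |∫ y in x..(x + 1/((n:ℝ)+1)), f t y| ≤ C * |(x + 1/((n:ℝ)+1)) - x| := by
    rw [← Real.norm_eq_abs (∫ y in _.._, _)]
    apply intervalIntegral.norm_integral_le_of_norm_le_const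
    intro y hy
    rw [Set.uIoc_of_le (by linarith)] at hy
    rw [Real.norm_eq_abs]
    exact hb y ⟨hy.1.le, by linarith [hy.2]⟩
  rw [AQ, abs_mul, abs_of_pos (by positivity : (0:ℝ) < (n:ℝ)+1)]
  calc |∫ y in x..(x + 1/((n:ℝ)+1)), f t y| * ((n:ℝ)+1)
      ≤ (C * |(x + 1/((n:ℝ)+1)) - x|) * ((n:ℝ)+1) := by
        apply mul_le_mul_of_nonneg_right key (by positivity)
    _ = C := by
        rw [add_sub_cancel_left, abs_of_pos hpos]
        field_simp

lemma DQ_eq_AQ {f fx : ℝ → ℝ → ℝ} (hfx : Continuous (uncurry fx)) (t : ℝ)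
    (hfd : ∀ y : ℝ, HasDerivAt (fun x' => f t x') (fx t y) y) (n : ℕ) (x : ℝ) :
    DQ f n t x = AQ fx n t x := by
  rw [DQ, AQ]
  congr 1
  rw [intervalIntegral.integral_eq_sub_of_hasDerivAt (fun y _ => hfd y)
    ((slice_cont hfx t).intervalIntegrable _ _)]

lemma bnd2 {T L' : ℝ} (f : ℝ → ℝ → ℝ) (hf : Continuous (uncurry f)) :
    ∃ C, 0 ≤ C ∧ ∀ t x, t ∈ Set.Icc 0 T → x ∈ Set.Icc 0 L' → |f t x| ≤ C := by
  obtain ⟨C, hC⟩ := (isCompact_Icc.prod isCompact_Icc).exists_bound_of_continuousOn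
    (s := Set.Icc (0:ℝ) T ×ˢ Set.Icc (0:ℝ) L') hf.continuousOn
  exact ⟨max C 0, le_max_right _ _, fun t x ht hx =>
    le_trans (hC (t, x) ⟨ht, hx⟩) (le_max_left _ _)⟩
end helpers

lemma green (T L : ℝ) (hT : 0 ≤ T) (hL : 0 ≤ L)
    (m m' : ℝ → ℝ) (hmc : Continuous m) (hm'c : Continuous m')
    (hmd : ∀ x, HasDerivAt m (m' x) x)
    (hm0 : m 0 = 0) (hmL : m L = 0)
    (η ψ G ηx ψx ψt : ℝ → ℝ → ℝ)
    (hη : Continuous (uncurry η)) (hψ : Continuous (uncurry ψ))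
    (hG : Continuous (uncurry G)) (hηx : Continuous (uncurry ηx))
    (hψxc : Continuous (uncurry ψx)) (hψtc : Continuous (uncurry ψt))
    (hηxd : ∀ t x : ℝ, HasDerivAt (fun x' => η t x') (ηx t x) x)
    (hψxd : ∀ t x : ℝ, HasDerivAt (fun x' => ψ t x') (ψx t x) x)
    (hψtd : ∀ t x : ℝ, HasDerivAt (fun t' => ψ t' x) (ψt t x) t)
    (heq1 : ∀ t x : ℝ, HasDerivAt (fun t' => η t' x) (G t x) t) :
    ∫ t in (0:ℝ)..T, ∫ x in (0:ℝ)..L,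
        (m x * (G t x * ψx t x) - (m' x * η t x + m x * ηx t x) * ψt t x)
      = (∫ x in (0:ℝ)..L, m x * (η T x * ψx T x))
        - ∫ x in (0:ℝ)..L, m x * (η 0 x * ψx 0 x) := by
  -- time derivative of the difference quotient of ψ
  have dDQt : ∀ (n : ℕ) (t x : ℝ), HasDerivAt (fun t' => DQ ψ n t' x) (DQ ψt n t x) t := by
    intro n t x
    exact ((hψtd t (x + 1/((n:ℝ)+1))).sub (hψtd t x)).mul_const ((n:ℝ)+1)
  -- step a : FTC in time, for fixed x
  have step_a : ∀ (n : ℕ) (x : ℝ),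
      (∫ t in (0:ℝ)..T, m x * (G t x * DQ ψ n t x + η t x * DQ ψt n t x))
        = m x * (η T x * DQ ψ n T x) - m x * (η 0 x * DQ ψ n 0 x) := by
    intro n x
    have hd : ∀ t : ℝ, HasDerivAt (fun t' => m x * (η t' x * DQ ψ n t' x))
        (m x * (G t x * DQ ψ n t x + η t x * DQ ψt n t x)) t := fun t =>
      ((heq1 t x).mul (dDQt n t x)).const_mul (m x)
    exact intervalIntegral.integral_eq_sub_of_hasDerivAt (fun t _ => hd t)
      ((continuous_const.mul (((slice_cont' hG x).mul (slice_cont' (DQ_cont hψ n) x)).add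
        ((slice_cont' hη x).mul (slice_cont' (DQ_cont hψtc n) x)))).intervalIntegrable _ _)
  -- step b : integrate step a over x
  have step_b : ∀ n : ℕ,
      (∫ x in (0:ℝ)..L, ∫ t in (0:ℝ)..T, m x * (G t x * DQ ψ n t x + η t x * DQ ψt n t x))
        = (∫ x in (0:ℝ)..L, m x * (η T x * DQ ψ n T x))
          - ∫ x in (0:ℝ)..L, m x * (η 0 x * DQ ψ n 0 x) := by
    intro n
    rw [← intervalIntegral.integral_sub (f := fun x => m x * (η T x * DQ ψ n T x))
      (g := fun x => m x * (η 0 x * DQ ψ n 0 x))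
      ((hmc.mul ((slice_cont hη T).mul (slice_cont (DQ_cont hψ n) T))).intervalIntegrable _ _)
      ((hmc.mul ((slice_cont hη 0).mul (slice_cont (DQ_cont hψ n) 0))).intervalIntegrable _ _)]
    apply intervalIntegral.integral_congr
    intro x _
    exact step_a n x
  -- step c : Fubini
  have step_c : ∀ n : ℕ,
      (∫ t in (0:ℝ)..T, ∫ x in (0:ℝ)..L, m x * (G t x * DQ ψ n t x + η t x * DQ ψt n t x))
        = ∫ x in (0:ℝ)..L, ∫ t in (0:ℝ)..T, m x * (G t x * DQ ψ n t x + η t x * DQ ψt n t x) := by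
    intro n
    apply fubini_cont hT hL
    exact (hmc.comp continuous_snd).mul ((hG.mul (DQ_cont hψ n)).add (hη.mul (DQ_cont hψtc n)))
  -- step d : FTC in x kills the m-weighted boundary
  have step_d : ∀ (n : ℕ) (t : ℝ),
      (∫ x in (0:ℝ)..L, ((m' x * η t x + m x * ηx t x) * AQ ψt n t x
          + m x * η t x * DQ ψt n t x)) = 0 := by
    intro n t
    have hd : ∀ x : ℝ, HasDerivAt (fun x' => m x' * η t x' * AQ ψt n t x')
        ((m' x * η t x + m x * ηx t x) * AQ ψt n t x + m x * η t x * DQ ψt n t x) x := fun x =>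
      ((hmd x).mul (hηxd t x)).mul (AQ_hasDerivAt hψtc n t x)
    rw [intervalIntegral.integral_eq_sub_of_hasDerivAt (fun x _ => hd x)
      (((((hm'c.mul (slice_cont hη t)).add (hmc.mul (slice_cont hηx t))).mul
        (slice_cont (AQ_cont hψtc n) t)).add
        (((hmc.mul (slice_cont hη t)).mul (slice_cont (DQ_cont hψtc n) t)))).intervalIntegrable _ _)]
    simp [hm0, hmL]
  -- per-t cancellation of the mixed term
  have per_t : ∀ (n : ℕ) (t : ℝ),
      (∫ x in (0:ℝ)..L, (m x * (G t x * DQ ψ n t x)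
          - (m' x * η t x + m x * ηx t x) * AQ ψt n t x))
        = ∫ x in (0:ℝ)..L, m x * (G t x * DQ ψ n t x + η t x * DQ ψt n t x) := by
    intro n t
    have e1 : Set.EqOn (fun x => m x * (G t x * DQ ψ n t x)
        - (m' x * η t x + m x * ηx t x) * AQ ψt n t x)
        (fun x => m x * (G t x * DQ ψ n t x + η t x * DQ ψt n t x)
          - ((m' x * η t x + m x * ηx t x) * AQ ψt n t x + m x * η t x * DQ ψt n t x))
        (Set.uIcc 0 L) := fun x _ => by ring
    rw [intervalIntegral.integral_congr e1, intervalIntegral.integral_sub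
      (f := fun x => m x * (G t x * DQ ψ n t x + η t x * DQ ψt n t x))
      (g := fun x => (m' x * η t x + m x * ηx t x) * AQ ψt n t x + m x * η t x * DQ ψt n t x)
      ((hmc.mul (((slice_cont hG t).mul (slice_cont (DQ_cont hψ n) t)).add
        ((slice_cont hη t).mul (slice_cont (DQ_cont hψtc n) t)))).intervalIntegrable _ _)
      (((((hm'c.mul (slice_cont hη t)).add (hmc.mul (slice_cont hηx t))).mul
        (slice_cont (AQ_cont hψtc n) t)).add
        ((hmc.mul (slice_cont hη t)).mul (slice_cont (DQ_cont hψtc n) t))).intervalIntegrable _ _),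
      step_d n t, sub_zero]
  -- exact identity for each n
  have I_n : ∀ n : ℕ,
      (∫ t in (0:ℝ)..T, ∫ x in (0:ℝ)..L, (m x * (G t x * DQ ψ n t x)
          - (m' x * η t x + m x * ηx t x) * AQ ψt n t x))
        = (∫ x in (0:ℝ)..L, m x * (η T x * DQ ψ n T x))
          - ∫ x in (0:ℝ)..L, m x * (η 0 x * DQ ψ n 0 x) := by
    intro n
    calc (∫ t in (0:ℝ)..T, ∫ x in (0:ℝ)..L, (m x * (G t x * DQ ψ n t x)
          - (m' x * η t x + m x * ηx t x) * AQ ψt n t x))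
        = ∫ t in (0:ℝ)..T, ∫ x in (0:ℝ)..L,
            m x * (G t x * DQ ψ n t x + η t x * DQ ψt n t x) :=
          intervalIntegral.integral_congr (fun t _ => per_t n t)
      _ = ∫ x in (0:ℝ)..L, ∫ t in (0:ℝ)..T,
            m x * (G t x * DQ ψ n t x + η t x * DQ ψt n t x) := step_c n
      _ = (∫ x in (0:ℝ)..L, m x * (η T x * DQ ψ n T x))
          - ∫ x in (0:ℝ)..L, m x * (η 0 x * DQ ψ n 0 x) := step_b n
  -- bounds on a slightly larger compact rectangle
  obtain ⟨Cm, hCm0, hCm⟩ := bnd2 (T := T) (L' := L+1) (fun t x => m x)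
    (hmc.comp continuous_snd)
  obtain ⟨Cm', hCm'0, hCm'⟩ := bnd2 (T := T) (L' := L+1) (fun t x => m' x)
    (hm'c.comp continuous_snd)
  obtain ⟨Cη, hCη0, hCη⟩ := bnd2 (T := T) (L' := L+1) η hη
  obtain ⟨CG, hCG0, hCG⟩ := bnd2 (T := T) (L' := L+1) G hG
  obtain ⟨Cηx, hCηx0, hCηx⟩ := bnd2 (T := T) (L' := L+1) ηx hηx
  obtain ⟨Cψx, hCψx0, hCψx⟩ := bnd2 (T := T) (L' := L+1) ψx hψxc
  obtain ⟨Cψt, hCψt0, hCψt⟩ := bnd2 (T := T) (L' := L+1) ψt hψtc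
  have bDQψ : ∀ (n : ℕ) (t x : ℝ), t ∈ Set.Icc 0 T → x ∈ Set.Icc 0 L →
      |DQ ψ n t x| ≤ Cψx := by
    intro n t x ht hx
    rw [DQ_eq_AQ hψxc t (hψxd t) n x]
    apply AQ_bound hψxc n
    intro y hy
    exact hCψx t y ht ⟨le_trans hx.1 hy.1, by linarith [hy.2, hx.2]⟩
  have bAQψt : ∀ (n : ℕ) (t x : ℝ), t ∈ Set.Icc 0 T → x ∈ Set.Icc 0 L →
      |AQ ψt n t x| ≤ Cψt := by
    intro n t x ht hx
    apply AQ_bound hψtc n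
    intro y hy
    exact hCψt t y ht ⟨le_trans hx.1 hy.1, by linarith [hy.2, hx.2]⟩
  have memL : ∀ x : ℝ, x ∈ Set.Icc (0:ℝ) L → x ∈ Set.Icc (0:ℝ) (L+1) :=
    fun x hx => ⟨hx.1, by linarith [hx.2]⟩
  -- limit of the left-hand sides
  have lim_lhs : Tendsto (fun n => ∫ t in (0:ℝ)..T, ∫ x in (0:ℝ)..L,
      (m x * (G t x * DQ ψ n t x) - (m' x * η t x + m x * ηx t x) * AQ ψt n t x)) atTop
      (𝓝 (∫ t in (0:ℝ)..T, ∫ x in (0:ℝ)..L,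
        (m x * (G t x * ψx t x) - (m' x * η t x + m x * ηx t x) * ψt t x))) := by
    apply tendsto_iint hT hL (C := Cm * (CG * Cψx) + (Cm' * Cη + Cm * Cηx) * Cψt)
    · intro n
      exact ((hmc.comp continuous_snd).mul (hG.mul (DQ_cont hψ n))).sub
        ((((hm'c.comp continuous_snd).mul hη).add
          ((hmc.comp continuous_snd).mul hηx)).mul (AQ_cont hψtc n))
    · intro n t x ht hx
      have h1 : |m x * (G t x * DQ ψ n t x)| ≤ Cm * (CG * Cψx) := by
        rw [abs_mul, abs_mul]
        exact mul_le_mul (hCm t x ht (memL x hx))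
          (mul_le_mul (hCG t x ht (memL x hx)) (bDQψ n t x ht hx) (abs_nonneg _) hCG0)
          (mul_nonneg (abs_nonneg _) (abs_nonneg _)) hCm0
      have h2 : |(m' x * η t x + m x * ηx t x) * AQ ψt n t x|
          ≤ (Cm' * Cη + Cm * Cηx) * Cψt := by
        rw [abs_mul]
        apply mul_le_mul ?_ (bAQψt n t x ht hx) (abs_nonneg _)
          (by positivity)
        calc |m' x * η t x + m x * ηx t x| ≤ |m' x * η t x| + |m x * ηx t x| := abs_add_le _ _
          _ ≤ Cm' * Cη + Cm * Cηx := by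
              rw [abs_mul, abs_mul]
              exact add_le_add
                (mul_le_mul (hCm' t x ht (memL x hx)) (hCη t x ht (memL x hx))
                  (abs_nonneg _) hCm'0)
                (mul_le_mul (hCm t x ht (memL x hx)) (hCηx t x ht (memL x hx))
                  (abs_nonneg _) hCm0)
      calc |m x * (G t x * DQ ψ n t x) - (m' x * η t x + m x * ηx t x) * AQ ψt n t x|
          ≤ |m x * (G t x * DQ ψ n t x)|
            + |(m' x * η t x + m x * ηx t x) * AQ ψt n t x| := abs_sub _ _
        _ ≤ Cm * (CG * Cψx) + (Cm' * Cη + Cm * Cηx) * Cψt := add_le_add h1 h2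
    · intro t x
      exact (tendsto_const_nhds.mul (tendsto_const_nhds.mul (DQ_tendsto (hψxd t x)))).sub
        (tendsto_const_nhds.mul (AQ_tendsto hψtc t x))
  -- limit of boundary terms
  have lim_b : ∀ s : ℝ, s ∈ Set.Icc (0:ℝ) T →
      Tendsto (fun n => ∫ x in (0:ℝ)..L, m x * (η s x * DQ ψ n s x)) atTop
        (𝓝 (∫ x in (0:ℝ)..L, m x * (η s x * ψx s x))) := by
    intro s hs
    apply tendsto_ii (C := Cm * (Cη * Cψx))
    · intro n
      exact hmc.mul ((slice_cont hη s).mul (slice_cont (DQ_cont hψ n) s))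
    · intro n x hx
      rw [Set.uIcc_of_le hL] at hx
      rw [abs_mul, abs_mul]
      exact mul_le_mul (hCm s x hs (memL x hx))
        (mul_le_mul (hCη s x hs (memL x hx)) (bDQψ n s x hs hx) (abs_nonneg _) hCη0)
        (mul_nonneg (abs_nonneg _) (abs_nonneg _)) hCm0
    · intro x _
      exact tendsto_const_nhds.mul (tendsto_const_nhds.mul (DQ_tendsto (hψxd s x)))
  have lim_rhs := (lim_b T ⟨le_refl 0 |>.trans hT, le_refl T⟩).sub
    (lim_b 0 ⟨le_refl 0, hT⟩)
  exact tendsto_nhds_unique ((lim_lhs.congr fun n => I_n n)) lim_rhs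

/-- Basic multiplier identity (Lemma 5.1 of the paper): with
`Θ = -η ∂ₜψ - (g/2) η²` and
`R_a = ∬ [(G(η)ψ) m ψₓ + (N(η)ψ) m ηₓ]`,
one has `∬ mₓ Θ + R_a = -[∫ ∂ₓ(mη) ψ]₀ᵀ - ∬ P_ext m ηₓ`. -/
theorem stmt13 (T L g : ℝ) (hT : 0 ≤ T) (hL : 0 < L) (hg : 0 < g)
    (m : ℝ → ℝ) (hm : ContDiff ℝ (⊤ : ℕ∞) m) (hm0 : m 0 = 0) (hmL : m L = 0)
    (η ψ G N P ηx ψx ψt : ℝ → ℝ → ℝ)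
    (hη : Continuous (Function.uncurry η)) (hψ : Continuous (Function.uncurry ψ))
    (hG : Continuous (Function.uncurry G)) (hN : Continuous (Function.uncurry N))
    (hP : Continuous (Function.uncurry P))
    (hηx : Continuous (Function.uncurry ηx)) (hψxc : Continuous (Function.uncurry ψx))
    (hψtc : Continuous (Function.uncurry ψt))
    (hηxd : ∀ t x : ℝ, HasDerivAt (fun x' => η t x') (ηx t x) x)
    (hψxd : ∀ t x : ℝ, HasDerivAt (fun x' => ψ t x') (ψx t x) x)
    (hψtd : ∀ t x : ℝ, HasDerivAt (fun t' => ψ t' x) (ψt t x) t)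
    (heq1 : ∀ t x : ℝ, HasDerivAt (fun t' => η t' x) (G t x) t)
    (heq2 : ∀ t x : ℝ, ψt t x = -(g * η t x) - N t x - P t x) :
    (∫ t in (0:ℝ)..T, ∫ x in (0:ℝ)..L,
        deriv m x * (-(η t x) * ψt t x - g/2 * (η t x) ^ 2))
      + (∫ t in (0:ℝ)..T, ∫ x in (0:ℝ)..L,
          (G t x * (m x * ψx t x) + N t x * (m x * ηx t x))) =
      -((∫ x in (0:ℝ)..L, deriv (fun x' => m x' * η T x') x * ψ T x)
          - ∫ x in (0:ℝ)..L, deriv (fun x' => m x' * η 0 x') x * ψ 0 x)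
      - ∫ t in (0:ℝ)..T, ∫ x in (0:ℝ)..L, P t x * (m x * ηx t x) := by
  have hL' : (0:ℝ) ≤ L := hL.le
  have hmc : Continuous m := hm.continuous
  have hmd : ∀ x, HasDerivAt m (deriv m x) x := fun x =>
    ((hm.differentiable (by simp)) x).hasDerivAt
  have hm'c : Continuous (deriv m) := hm.continuous_deriv (by simp)
  -- S2 : FTC in x for m η ψ
  have S2 : ∀ t : ℝ, (∫ x in (0:ℝ)..L,
      ((deriv m x * η t x + m x * ηx t x) * ψ t x + m x * η t x * ψx t x)) = 0 := by
    intro t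
    have hd : ∀ x : ℝ, HasDerivAt (fun x' => m x' * η t x' * ψ t x')
        ((deriv m x * η t x + m x * ηx t x) * ψ t x + m x * η t x * ψx t x) x := fun x =>
      ((hmd x).mul (hηxd t x)).mul (hψxd t x)
    rw [intervalIntegral.integral_eq_sub_of_hasDerivAt (fun x _ => hd x)
      (((((hm'c.mul (slice_cont hη t)).add (hmc.mul (slice_cont hηx t))).mul
        (slice_cont hψ t)).add
        ((hmc.mul (slice_cont hη t)).mul (slice_cont hψxc t))).intervalIntegrable _ _)]
    simp [hm0, hmL]
  -- S3 : FTC in x for (g/2) m η²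
  have S3 : ∀ t : ℝ, (∫ x in (0:ℝ)..L,
      (g/2 * (deriv m x * η t x ^ 2 + m x * (2 * η t x * ηx t x)))) = 0 := by
    intro t
    have hd : ∀ x : ℝ, HasDerivAt (fun x' => g/2 * (m x' * η t x' ^ 2))
        (g/2 * (deriv m x * η t x ^ 2 + m x * (2 * η t x * ηx t x))) x := by
      intro x
      have h := ((hmd x).mul ((hηxd t x).pow 2)).const_mul (g/2)
      refine h.congr_deriv ?_
      simp only [Pi.pow_apply]
      ring
    rw [intervalIntegral.integral_eq_sub_of_hasDerivAt (fun x _ => hd x)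
      ((continuous_const.mul ((hm'c.mul ((slice_cont hη t).pow 2)).add
        (hmc.mul ((continuous_const.mul (slice_cont hη t)).mul
          (slice_cont hηx t))))).intervalIntegrable _ _)]
    simp [hm0, hmL]
  -- rewrite of the boundary integrand
  have Qrw : ∀ t : ℝ, (∫ x in (0:ℝ)..L, deriv (fun x' => m x' * η t x') x * ψ t x)
      = ∫ x in (0:ℝ)..L, (deriv m x * η t x + m x * ηx t x) * ψ t x := by
    intro t
    apply intervalIntegral.integral_congr
    intro x _
    exact congrArg (· * ψ t x) (((hmd x).mul (hηxd t x)).deriv)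
  have QS : ∀ t : ℝ, (∫ x in (0:ℝ)..L, (deriv m x * η t x + m x * ηx t x) * ψ t x)
      = -∫ x in (0:ℝ)..L, m x * (η t x * ψx t x) := by
    intro t
    have h := S2 t
    rw [intervalIntegral.integral_add
      (f := fun x => (deriv m x * η t x + m x * ηx t x) * ψ t x)
      (g := fun x => m x * η t x * ψx t x)
      ((((hm'c.mul (slice_cont hη t)).add (hmc.mul (slice_cont hηx t))).mul
        (slice_cont hψ t)).intervalIntegrable _ _)
      (((hmc.mul (slice_cont hη t)).mul (slice_cont hψxc t)).intervalIntegrable _ _)] at h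
    have e : (∫ x in (0:ℝ)..L, m x * η t x * ψx t x)
        = ∫ x in (0:ℝ)..L, m x * (η t x * ψx t x) :=
      intervalIntegral.integral_congr (fun x _ => by ring)
    rw [e] at h
    linarith
  -- per-t key identity
  have key : ∀ t : ℝ,
      (∫ x in (0:ℝ)..L, deriv m x * (-(η t x) * ψt t x - g/2 * (η t x) ^ 2))
        + (∫ x in (0:ℝ)..L, (G t x * (m x * ψx t x) + N t x * (m x * ηx t x)))
        + (∫ x in (0:ℝ)..L, P t x * (m x * ηx t x))
      = ∫ x in (0:ℝ)..L,
          (m x * (G t x * ψx t x) - (deriv m x * η t x + m x * ηx t x) * ψt t x) := by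
    intro t
    have i1 : IntervalIntegrable
        (fun x => deriv m x * (-(η t x) * ψt t x - g/2 * (η t x) ^ 2)) volume 0 L :=
      (hm'c.mul (((slice_cont hη t).neg.mul (slice_cont hψtc t)).sub
        (continuous_const.mul ((slice_cont hη t).pow 2)))).intervalIntegrable _ _
    have i2 : IntervalIntegrable
        (fun x => G t x * (m x * ψx t x) + N t x * (m x * ηx t x)) volume 0 L :=
      (((slice_cont hG t).mul (hmc.mul (slice_cont hψxc t))).add
        ((slice_cont hN t).mul (hmc.mul (slice_cont hηx t)))).intervalIntegrable _ _
    have i3 : IntervalIntegrable (fun x => P t x * (m x * ηx t x)) volume 0 L :=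
      ((slice_cont hP t).mul (hmc.mul (slice_cont hηx t))).intervalIntegrable _ _
    have icrux : IntervalIntegrable
        (fun x => m x * (G t x * ψx t x) - (deriv m x * η t x + m x * ηx t x) * ψt t x)
        volume 0 L :=
      ((hmc.mul ((slice_cont hG t).mul (slice_cont hψxc t))).sub
        (((hm'c.mul (slice_cont hη t)).add (hmc.mul (slice_cont hηx t))).mul
          (slice_cont hψtc t))).intervalIntegrable _ _
    have iS3 : IntervalIntegrable
        (fun x => g/2 * (deriv m x * η t x ^ 2 + m x * (2 * η t x * ηx t x))) volume 0 L :=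
      (continuous_const.mul ((hm'c.mul ((slice_cont hη t).pow 2)).add
        (hmc.mul ((continuous_const.mul (slice_cont hη t)).mul
          (slice_cont hηx t))))).intervalIntegrable _ _
    rw [← intervalIntegral.integral_add i1 i2, ← intervalIntegral.integral_add (i1.add i2) i3]
    have e : Set.EqOn
        (fun x => deriv m x * (-(η t x) * ψt t x - g/2 * (η t x) ^ 2)
          + (G t x * (m x * ψx t x) + N t x * (m x * ηx t x)) + P t x * (m x * ηx t x))
        (fun x => (m x * (G t x * ψx t x) - (deriv m x * η t x + m x * ηx t x) * ψt t x)
          - g/2 * (deriv m x * η t x ^ 2 + m x * (2 * η t x * ηx t x)))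
        (Set.uIcc 0 L) := by
      intro x _
      have hN' : N t x = -ψt t x - g * η t x - P t x := by linarith [heq2 t x]
      simp only
      rw [hN']
      ring
    rw [intervalIntegral.integral_congr e, intervalIntegral.integral_sub icrux iS3, S3 t,
      sub_zero]
  -- outer assembly
  have int_t : ∀ (f : ℝ → ℝ → ℝ), Continuous (uncurry f) →
      IntervalIntegrable (fun t => ∫ x in (0:ℝ)..L, f t x) volume 0 T := fun f hf =>
    (intervalIntegral.continuous_parametric_intervalIntegral_of_continuous'
      hf 0 L).intervalIntegrable _ _
  have c1 : Continuous (uncurry fun t x =>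
      deriv m x * (-(η t x) * ψt t x - g/2 * (η t x) ^ 2)) :=
    (hm'c.comp continuous_snd).mul ((hη.neg.mul hψtc).sub
      (continuous_const.mul (hη.pow 2)))
  have c2 : Continuous (uncurry fun t x =>
      G t x * (m x * ψx t x) + N t x * (m x * ηx t x)) :=
    (hG.mul ((hmc.comp continuous_snd).mul hψxc)).add
      (hN.mul ((hmc.comp continuous_snd).mul hηx))
  have c3 : Continuous (uncurry fun t x => P t x * (m x * ηx t x)) :=
    hP.mul ((hmc.comp continuous_snd).mul hηx)
  have main : (∫ t in (0:ℝ)..T, ∫ x in (0:ℝ)..L,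
        deriv m x * (-(η t x) * ψt t x - g/2 * (η t x) ^ 2))
      + (∫ t in (0:ℝ)..T, ∫ x in (0:ℝ)..L,
          (G t x * (m x * ψx t x) + N t x * (m x * ηx t x)))
      + (∫ t in (0:ℝ)..T, ∫ x in (0:ℝ)..L, P t x * (m x * ηx t x))
      = (∫ x in (0:ℝ)..L, m x * (η T x * ψx T x))
        - ∫ x in (0:ℝ)..L, m x * (η 0 x * ψx 0 x) := by
    rw [← intervalIntegral.integral_add (int_t _ c1) (int_t _ c2),
      ← intervalIntegral.integral_add ((int_t _ c1).add (int_t _ c2)) (int_t _ c3)]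
    rw [intervalIntegral.integral_congr (fun t _ => key t)]
    exact green T L hT hL' m (deriv m) hmc hm'c hmd hm0 hmL η ψ G ηx ψx ψt
      hη hψ hG hηx hψxc hψtc hηxd hψxd hψtd heq1
  have hQT := (Qrw T).trans (QS T)
  have hQ0 := (Qrw 0).trans (QS 0)
  rw [hQT, hQ0]
  linarith [main]
end
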